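/- arXiv:2502.17686 — 2 statements merged into one kernel-verified Lean document; each statement's English description precedes it below -/
import Mathlib

section
/- Let G be a 3-uniform hypergraph and let A be the set of vertices of G that are not aggressively Berge-K_{1,ℓ}-saturated. If every vertex in A has Berge degree at most ℓ−1, every vertex outside A has Berge degree exactly ℓ−1, and every 3-element subset of A is an edge of G, then G is Berge-K_{1,ℓ}-saturated. -/
open Finset

variable {V : Type} [DecidableEq V]

/-- A hypergraph (given by its edge set) is 3-uniform. -/
def Uniform3 (E : Finset (Finset V)) : Prop := ∀ e ∈ E, e.card = 3

/-- There is a Berge star `K_{1,m}` centered at `v`: `m` distinct leaves `y i`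
and `m` distinct hyperedges `f i` with `{v, y i} ⊆ f i`. -/
def IsBergeStar (E : Finset (Finset V)) (v : V) (m : ℕ) : Prop :=
  ∃ (y : Fin m → V) (f : Fin m → Finset V),
    Function.Injective y ∧ Function.Injective f ∧
    ∀ i, f i ∈ E ∧ v ∈ f i ∧ y i ∈ f i ∧ y i ≠ v

/-- The Berge degree of `v`: the largest `m` such that a Berge star `K_{1,m}`
centered at `v` exists. -/
noncomputable def bergeDeg (E : Finset (Finset V)) (v : V) : ℕ :=
  sSup {m | IsBergeStar E v m}

/-- The degree of `v`: the number of hyperedges containing `v`. -/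
def hdeg (E : Finset (Finset V)) (v : V) : ℕ := (E.filter (fun e => v ∈ e)).card

/-- The neighborhood of `v`: vertices sharing an edge with `v`. -/
def nbr (E : Finset (Finset V)) (v : V) : Finset V :=
  ((E.filter (fun e => v ∈ e)).biUnion id).erase v

/-- The link graph of `v`: graph on `N(v)` with `x ~ y` iff `{v,x,y} ∈ E`. -/
def linkGraph (E : Finset (Finset V)) (v : V) : SimpleGraph {x // x ∈ nbr E v} :=
  SimpleGraph.fromRel (fun a b => ({v, a.1, b.1} : Finset V) ∈ E)

/-- The number of connected components of the link graph of `v` that are trees. -/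
noncomputable def treeCount (E : Finset (Finset V)) (v : V) : ℕ :=
  Nat.card {c : (linkGraph E v).ConnectedComponent //
    ((linkGraph E v).induce c.supp).IsTree}

/-- `x` lies in a tree component of the link graph `L(v)`. -/
def InTreeComp (E : Finset (Finset V)) (v : V) (x : {z // z ∈ nbr E v}) : Prop :=
  ((linkGraph E v).induce ((linkGraph E v).connectedComponentMk x).supp).IsTree

/-- `v` is aggressively Berge-`K_{1,ℓ}`-saturated of type I: `d^B(v) = ℓ-1` and the
vertices of `L(v)` not lying in tree components form a clique in `L(v)`. -/
def TypeI (E : Finset (Finset V)) (ℓ : ℕ) (v : V) : Prop :=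
  bergeDeg E v = ℓ - 1 ∧
  ∀ x y : {z // z ∈ nbr E v}, ¬ InTreeComp E v x → ¬ InTreeComp E v y → x ≠ y →
    (linkGraph E v).Adj x y

/-- `v` is aggressively Berge-`K_{1,ℓ}`-saturated of type II: not of type I,
`d^B(v) = ℓ-1`, and any two distinct non-tree-component vertices `x, y` of `N(v)`
are adjacent in `L(v)` or one of them is of type I. -/
def TypeII (E : Finset (Finset V)) (ℓ : ℕ) (v : V) : Prop :=
  ¬ TypeI E ℓ v ∧ bergeDeg E v = ℓ - 1 ∧
  ∀ x y : {z // z ∈ nbr E v}, ¬ InTreeComp E v x → ¬ InTreeComp E v y → x ≠ y →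
    ((linkGraph E v).Adj x y ∨ TypeI E ℓ x.1 ∨ TypeI E ℓ y.1)

set_option linter.unusedSectionVars false

section AuxLemmas
section Aux

variable {E : Finset (Finset V)} {v : V}

lemma mem_nbr {x : V} : x ∈ nbr E v ↔ x ≠ v ∧ ∃ e ∈ E, v ∈ e ∧ x ∈ e := by
  simp only [nbr, mem_erase, mem_biUnion, mem_filter, id]
  constructor
  · rintro ⟨h1, e, ⟨he, hv⟩, hx⟩; exact ⟨h1, e, he, hv, hx⟩
  · rintro ⟨h1, e, he, hv, hx⟩; exact ⟨h1, e, ⟨he, hv⟩, hx⟩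

lemma mem_nbr_of_edge {x : V} {e : Finset V} (he : e ∈ E) (hv : v ∈ e) (hx : x ∈ e)
    (hxv : x ≠ v) : x ∈ nbr E v :=
  mem_nbr.mpr ⟨hxv, e, he, hv, hx⟩

lemma bergeStar_zero : IsBergeStar E v 0 :=
  ⟨Fin.elim0, Fin.elim0, fun i => i.elim0, fun i => i.elim0, fun i => i.elim0⟩

lemma bddAbove_star : BddAbove {m | IsBergeStar E v m} := by
  refine ⟨E.card, fun m hm => ?_⟩
  obtain ⟨y, f, hy, hf, hp⟩ := hm
  have hinj : Function.Injective (fun i : Fin m => (⟨f i, (hp i).1⟩ : {e // e ∈ E})) :=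
    fun i j h => hf (congrArg Subtype.val h)
  simpa using Fintype.card_le_of_injective _ hinj

lemma le_bergeDeg_of_star {m : ℕ} (h : IsBergeStar E v m) : m ≤ bergeDeg E v :=
  le_csSup bddAbove_star h

lemma star_bergeDeg : IsBergeStar E v (bergeDeg E v) := by
  refine Nat.sSup_mem ⟨0, ?_⟩ bddAbove_star
  exact bergeStar_zero

lemma star_of_finset (S : Finset V) (g : V → Finset V) (hinj : Set.InjOn g S)
    (hp : ∀ x ∈ S, g x ∈ E ∧ v ∈ g x ∧ x ∈ g x ∧ x ≠ v) : IsBergeStar E v S.card := by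
  refine ⟨fun i => (S.equivFin.symm i).1, fun i => g (S.equivFin.symm i).1, ?_, ?_, ?_⟩
  · intro i j h; exact S.equivFin.symm.injective (Subtype.ext h)
  · intro i j h
    exact S.equivFin.symm.injective
      (Subtype.ext (hinj (S.equivFin.symm i).2 (S.equivFin.symm j).2 h))
  · intro i
    exact hp _ (S.equivFin.symm i).2

lemma finset_of_star {m : ℕ} (h : IsBergeStar E v m) :
    ∃ (S : Finset V) (g : V → Finset V), S.card = m ∧ Set.InjOn g S ∧
      ∀ x ∈ S, g x ∈ E ∧ v ∈ g x ∧ x ∈ g x ∧ x ≠ v := by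
  classical
  obtain ⟨y, f, hy, hf, hp⟩ := h
  refine ⟨Finset.image y Finset.univ,
    fun x => if h : ∃ i, y i = x then f h.choose else ∅, ?_, ?_, ?_⟩
  · rw [Finset.card_image_of_injective _ hy, Finset.card_univ, Fintype.card_fin]
  · intro x1 hx1 x2 hx2 heq
    simp only [Finset.coe_image, Set.mem_image, Finset.coe_univ, Set.image_univ,
      Set.mem_range] at hx1 hx2
    obtain ⟨i, rfl⟩ := hx1
    obtain ⟨j, rfl⟩ := hx2
    have e1 : ∃ k, y k = y i := ⟨i, rfl⟩
    have e2 : ∃ k, y k = y j := ⟨j, rfl⟩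
    dsimp only at heq
    rw [dif_pos e1, dif_pos e2] at heq
    rw [← e1.choose_spec, ← e2.choose_spec, hf heq]
  · intro x hx
    simp only [Finset.mem_image, Finset.mem_univ, true_and] at hx
    obtain ⟨i, rfl⟩ := hx
    have e1 : ∃ k, y k = y i := ⟨i, rfl⟩
    dsimp only
    rw [dif_pos e1]
    have : e1.choose = i := hy e1.choose_spec
    rw [this]
    exact hp i

lemma exists_parent {α : Type} (G : SimpleGraph α) {x r : α} (h : G.Reachable x r)
    (hx : x ≠ r) : ∃ w, G.Adj x w ∧ G.dist w r < G.dist x r := by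
  obtain ⟨W, hW⟩ := h.exists_walk_length_eq_dist
  cases W with
  | nil => exact absurd rfl hx
  | cons ha q =>
    refine ⟨_, ha, ?_⟩
    have h1 := SimpleGraph.dist_le q
    simp only [SimpleGraph.Walk.length_cons] at hW
    omega

lemma triple_comm (v x z : V) : ({v, x, z} : Finset V) = {v, z, x} := by
  rw [Finset.pair_comm x z]

lemma eq_triple {e : Finset V} (hc : e.card = 3) {v x : V} (hv : v ∈ e) (hx : x ∈ e)
    (hxv : x ≠ v) : ∃ z, z ≠ v ∧ z ≠ x ∧ e = {v, x, z} := by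
  have hsub : ({v, x} : Finset V) ⊆ e := by
    intro w hw
    rcases Finset.mem_insert.mp hw with rfl | hw
    · exact hv
    · exact Finset.mem_singleton.mp hw ▸ hx
  have hcard : (e \ {v, x}).card = 1 := by
    rw [Finset.card_sdiff_of_subset hsub, hc, Finset.card_pair hxv.symm]
  obtain ⟨z, hz⟩ := Finset.card_eq_one.mp hcard
  have hzm : z ∈ e \ ({v, x} : Finset V) := hz ▸ Finset.mem_singleton_self z
  rw [Finset.mem_sdiff, Finset.mem_insert, Finset.mem_singleton] at hzm
  refine ⟨z, fun h => hzm.2 (Or.inl h), fun h => hzm.2 (Or.inr h), ?_⟩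
  ext w
  simp only [Finset.mem_insert, Finset.mem_singleton]
  constructor
  · intro hw
    by_cases h1 : w = v
    · exact Or.inl h1
    by_cases h2 : w = x
    · exact Or.inr (Or.inl h2)
    refine Or.inr (Or.inr ?_)
    have : w ∈ e \ ({v, x} : Finset V) := by
      rw [Finset.mem_sdiff, Finset.mem_insert, Finset.mem_singleton]
      exact ⟨hw, by tauto⟩
    rw [hz] at this
    exact Finset.mem_singleton.mp this
  · rintro (rfl | rfl | rfl)
    exacts [hv, hx, hzm.1]


lemma tree_case {ℓ : ℕ} {e : Finset V} {a : V} (hU : Uniform3 E)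
    (hdeg : bergeDeg E v = ℓ - 1) (hℓ : 1 ≤ ℓ) (heE : e ∉ E)
    (hve : v ∈ e) (hae : a ∈ e) (hav : a ≠ v)
    (ha : a ∈ nbr E v) (htree0 : InTreeComp E v ⟨a, ha⟩) :
    ℓ ≤ bergeDeg (insert e E) v := by
  classical
  obtain ⟨S0, g0, hS0card, hg0inj, hg0⟩ := finset_of_star (star_bergeDeg (E := E) (v := v))
  rw [hdeg] at hS0card
  have htree : ((linkGraph E v).induce
      ((linkGraph E v).connectedComponentMk ⟨a, ha⟩).supp).IsTree := htree0
  set L := linkGraph E v with hLdef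
  set ahat : {z // z ∈ nbr E v} := ⟨a, ha⟩ with hahat
  set C := L.connectedComponentMk ahat with hC
  have hahatsupp : ahat ∈ C.supp := by
    rw [SimpleGraph.ConnectedComponent.mem_supp_iff]
  have hnbr_ne_v : ∀ x : V, x ∈ nbr E v → x ≠ v := fun x hx => (mem_nbr.mp hx).1
  have hadj_edge : ∀ x w : {z // z ∈ nbr E v}, L.Adj x w →
      ({v, x.1, w.1} : Finset V) ∈ E ∧ x.1 ≠ w.1 := by
    intro x w hadj
    simp only [hLdef, linkGraph, SimpleGraph.fromRel_adj] at hadj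
    obtain ⟨hne, h | h⟩ := hadj
    · exact ⟨h, fun hh => hne (Subtype.ext hh)⟩
    · exact ⟨by rw [triple_comm]; exact h, fun hh => hne (Subtype.ext hh)⟩
  have hadj_of_mem : ∀ x w : {z // z ∈ nbr E v}, ({v, x.1, w.1} : Finset V) ∈ E →
      x.1 ≠ w.1 → L.Adj x w := by
    intro x w hmem hne
    simp only [hLdef, linkGraph, SimpleGraph.fromRel_adj]
    exact ⟨fun h => hne (congrArg Subtype.val h), Or.inl hmem⟩
  have hsupp_of_adj : ∀ x w : {z // z ∈ nbr E v}, x ∈ C.supp → L.Adj x w → w ∈ C.supp := by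
    intro x w hx hadj
    rw [SimpleGraph.ConnectedComponent.mem_supp_iff] at hx ⊢
    rw [← hx]
    exact SimpleGraph.ConnectedComponent.connectedComponentMk_eq_of_adj hadj.symm
  -- parent function towards ahat
  have hpar : ∀ x : {z // z ∈ nbr E v}, ∃ w : {z // z ∈ nbr E v}, x ∈ C.supp → x ≠ ahat →
      L.Adj x w ∧ w ∈ C.supp ∧ L.dist w ahat < L.dist x ahat := by
    intro x
    by_cases hx : x ∈ C.supp ∧ x ≠ ahat
    · have hreach : L.Reachable x ahat := by
        have h1 := hx.1
        rw [SimpleGraph.ConnectedComponent.mem_supp_iff, hC] at h1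
        exact SimpleGraph.ConnectedComponent.eq.mp h1
      obtain ⟨w, hw1, hw2⟩ := exists_parent L hreach hx.2
      exact ⟨w, fun _ _ => ⟨hw1, hsupp_of_adj x w hx.1 hw1, hw2⟩⟩
    · exact ⟨x, fun h1 h2 => absurd ⟨h1, h2⟩ hx⟩
  choose P hP using hpar
  set Tfin : Finset {z // z ∈ nbr E v} := Finset.univ.filter (fun x => x ∈ C.supp) with hTfin
  set Timg : Finset V := Tfin.image Subtype.val with hTimg
  have mem_Timg : ∀ x : V, x ∈ Timg ↔
      ∃ hx : x ∈ nbr E v, (⟨x, hx⟩ : {z // z ∈ nbr E v}) ∈ C.supp := by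
    intro x
    simp only [hTimg, hTfin, Finset.mem_image, Finset.mem_filter, Finset.mem_univ, true_and]
    constructor
    · rintro ⟨⟨x', hx'⟩, hsupp, rfl⟩; exact ⟨hx', hsupp⟩
    · rintro ⟨hx, hsupp⟩; exact ⟨⟨x, hx⟩, hsupp, rfl⟩
  set g : V → Finset V := fun x => if x = a then e
    else if h : ∃ hx : x ∈ nbr E v, (⟨x, hx⟩ : {z // z ∈ nbr E v}) ∈ C.supp
      then {v, x, (P ⟨x, h.choose⟩).1} else g0 x with hg
  have hg_a : g a = e := by simp [hg]
  have hg_tree : ∀ (x : V) (hx : x ∈ nbr E v), x ≠ a →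
      (⟨x, hx⟩ : {z // z ∈ nbr E v}) ∈ C.supp → g x = {v, x, (P ⟨x, hx⟩).1} := by
    intro x hx hxa hsupp
    have hex : ∃ hx : x ∈ nbr E v, (⟨x, hx⟩ : {z // z ∈ nbr E v}) ∈ C.supp := ⟨hx, hsupp⟩
    simp only [hg, if_neg hxa, dif_pos hex]
  have hg_out : ∀ x : V, x ≠ a → x ∉ Timg → g x = g0 x := by
    intro x hxa hxT
    have hne : ¬ ∃ hx : x ∈ nbr E v, (⟨x, hx⟩ : {z // z ∈ nbr E v}) ∈ C.supp :=
      fun h => hxT ((mem_Timg x).mpr h)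
    simp only [hg, if_neg hxa, dif_neg hne]
  -- the tree-edge facts
  have htedge : ∀ (x : V) (hx : x ∈ nbr E v), x ≠ a →
      (hsupp : (⟨x, hx⟩ : {z // z ∈ nbr E v}) ∈ C.supp) →
      g x ∈ E ∧ g x = {v, x, (P ⟨x, hx⟩).1} ∧ (P ⟨x, hx⟩).1 ≠ v ∧ x ≠ (P ⟨x, hx⟩).1 := by
    intro x hx hxa hsupp
    have hxne : (⟨x, hx⟩ : {z // z ∈ nbr E v}) ≠ ahat :=
      fun h => hxa (congrArg Subtype.val h)
    obtain ⟨hadj, hwsupp, _⟩ := hP ⟨x, hx⟩ hsupp hxne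
    obtain ⟨hmem, hne⟩ := hadj_edge _ _ hadj
    rw [hg_tree x hx hxa hsupp]
    exact ⟨hmem, rfl, hnbr_ne_v _ (P ⟨x, hx⟩).2, hne⟩
  have hPsupp : ∀ (x : V) (hx : x ∈ nbr E v), x ≠ a →
      (hsupp : (⟨x, hx⟩ : {z // z ∈ nbr E v}) ∈ C.supp) → P ⟨x, hx⟩ ∈ C.supp := by
    intro x hx hxa hsupp
    have hxne : (⟨x, hx⟩ : {z // z ∈ nbr E v}) ≠ ahat :=
      fun h => hxa (congrArg Subtype.val h)
    exact (hP ⟨x, hx⟩ hsupp hxne).2.1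
  -- properties of g on the union
  have hprops : ∀ x ∈ Timg ∪ S0, g x ∈ insert e E ∧ v ∈ g x ∧ x ∈ g x ∧ x ≠ v := by
    intro x hxS
    by_cases hxa : x = a
    · subst hxa
      rw [hg_a]
      exact ⟨Finset.mem_insert_self e E, hve, hae, hav⟩
    by_cases hxT : x ∈ Timg
    · obtain ⟨hx, hsupp⟩ := (mem_Timg x).mp hxT
      obtain ⟨hmem, hform, _, _⟩ := htedge x hx hxa hsupp
      rw [hform]
      exact ⟨Finset.mem_insert_of_mem (hform ▸ hmem), Finset.mem_insert_self _ _,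
        Finset.mem_insert_of_mem (Finset.mem_insert_self _ _), hnbr_ne_v x hx⟩
    · have hxS0 : x ∈ S0 := by
        rcases Finset.mem_union.mp hxS with h | h
        · exact absurd h hxT
        · exact h
      rw [hg_out x hxa hxT]
      obtain ⟨h1, h2, h3, h4⟩ := hg0 x hxS0
      exact ⟨Finset.mem_insert_of_mem h1, h2, h3, h4⟩
  -- injectivity of g
  have hgE : ∀ x ∈ Timg ∪ S0, x ≠ a → g x ∈ E := by
    intro x hxS hxa
    by_cases hxT : x ∈ Timg
    · obtain ⟨hx, hsupp⟩ := (mem_Timg x).mp hxT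
      exact (htedge x hx hxa hsupp).1
    · have hxS0 : x ∈ S0 := by
        rcases Finset.mem_union.mp hxS with h | h
        · exact absurd h hxT
        · exact h
      rw [hg_out x hxa hxT]
      exact (hg0 x hxS0).1
  have mixed : ∀ z z' : V, z ∈ Timg → z ≠ a → z' ∈ S0 → z' ∉ Timg → z' ≠ a →
      g z = g z' → False := by
    intro z z' hzT hza hz'S0 hz'T hz'a heq
    obtain ⟨hz, hsupp⟩ := (mem_Timg z).mp hzT
    obtain ⟨_, hform, _, _⟩ := htedge z hz hza hsupp
    rw [hform, hg_out z' hz'a hz'T] at heq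
    have hz'mem : z' ∈ ({v, z, (P ⟨z, hz⟩).1} : Finset V) := heq ▸ (hg0 z' hz'S0).2.2.1
    simp only [Finset.mem_insert, Finset.mem_singleton] at hz'mem
    rcases hz'mem with rfl | rfl | hz'P
    · exact (hg0 z' hz'S0).2.2.2 rfl
    · exact hz'T hzT
    · apply hz'T
      rw [mem_Timg]
      refine ⟨hz'P ▸ (P ⟨z, hz⟩).2, ?_⟩
      have : (⟨z', hz'P ▸ (P ⟨z, hz⟩).2⟩ : {w // w ∈ nbr E v}) = P ⟨z, hz⟩ :=
        Subtype.ext hz'P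
      rw [this]
      exact hPsupp z hz hza hsupp
  have hinj : Set.InjOn g ↑(Timg ∪ S0) := by
    intro x hxS' x' hx'S' heq
    have hxS : x ∈ Timg ∪ S0 := hxS'
    have hx'S : x' ∈ Timg ∪ S0 := hx'S'
    by_contra hne
    have hxa : x ≠ a := by
      intro hxeq
      apply heE
      have hx'ne : x' ≠ a := fun h => hne (hxeq.trans h.symm)
      rw [hxeq, hg_a] at heq
      exact heq ▸ hgE x' hx'S hx'ne
    have hx'a : x' ≠ a := by
      intro hxeq
      apply heE
      rw [hxeq, hg_a] at heq
      exact heq.symm ▸ hgE x hxS hxa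
    by_cases hxT : x ∈ Timg <;> by_cases hx'T : x' ∈ Timg
    · -- both tree vertices
      obtain ⟨hx, hsupp⟩ := (mem_Timg x).mp hxT
      obtain ⟨hx', hsupp'⟩ := (mem_Timg x').mp hx'T
      obtain ⟨_, hform, hPv, hxP⟩ := htedge x hx hxa hsupp
      obtain ⟨_, hform', hPv', hxP'⟩ := htedge x' hx' hx'a hsupp'
      rw [hform, hform'] at heq
      have hvx : v ∉ ({x, (P ⟨x, hx⟩).1} : Finset V) := by
        simp only [Finset.mem_insert, Finset.mem_singleton]
        rintro (h | h)
        · exact hnbr_ne_v x hx h.symm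
        · exact hPv h.symm
      have hvx' : v ∉ ({x', (P ⟨x', hx'⟩).1} : Finset V) := by
        simp only [Finset.mem_insert, Finset.mem_singleton]
        rintro (h | h)
        · exact hnbr_ne_v x' hx' h.symm
        · exact hPv' h.symm
      have hpair : ({x, (P ⟨x, hx⟩).1} : Finset V) = {x', (P ⟨x', hx'⟩).1} := by
        have h1 := Finset.erase_insert hvx
        have h2 := Finset.erase_insert hvx'
        rw [← h1, ← h2, heq]
      have hx_mem : x = x' ∨ x = (P ⟨x', hx'⟩).1 := by
        have hm : x ∈ ({x', (P ⟨x', hx'⟩).1} : Finset V) := by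
          rw [← hpair]; exact Finset.mem_insert_self _ _
        simpa using hm
      have hx'_mem : x' = x ∨ x' = (P ⟨x, hx⟩).1 := by
        have hm : x' ∈ ({x, (P ⟨x, hx⟩).1} : Finset V) := by
          rw [hpair]; exact Finset.mem_insert_self _ _
        simpa using hm
      rcases hx_mem with h | hxPx'
      · exact hne h
      rcases hx'_mem with h | hx'Px
      · exact hne h.symm
      have e1 : (⟨x, hx⟩ : {z // z ∈ nbr E v}) = P ⟨x', hx'⟩ := Subtype.ext hxPx'
      have e2 : (⟨x', hx'⟩ : {z // z ∈ nbr E v}) = P ⟨x, hx⟩ := Subtype.ext hx'Px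
      have hxne2 : (⟨x, hx⟩ : {z // z ∈ nbr E v}) ≠ ahat := fun h => hxa (congrArg Subtype.val h)
      have hx'ne2 : (⟨x', hx'⟩ : {z // z ∈ nbr E v}) ≠ ahat := fun h => hx'a (congrArg Subtype.val h)
      have d1 := (hP ⟨x, hx⟩ hsupp hxne2).2.2
      have d2 := (hP ⟨x', hx'⟩ hsupp' hx'ne2).2.2
      rw [← e2] at d1
      rw [← e1] at d2
      omega
    · exact mixed x x' hxT hxa (by
        rcases Finset.mem_union.mp hx'S with h | h
        · exact absurd h hx'T
        · exact h) hx'T hx'a heq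
    · exact mixed x' x hx'T hx'a (by
        rcases Finset.mem_union.mp hxS with h | h
        · exact absurd h hxT
        · exact h) hxT hxa heq.symm
    · have hxS0 : x ∈ S0 := by
        rcases Finset.mem_union.mp hxS with h | h
        · exact absurd h hxT
        · exact h
      have hx'S0 : x' ∈ S0 := by
        rcases Finset.mem_union.mp hx'S with h | h
        · exact absurd h hx'T
        · exact h
      rw [hg_out x hxa hxT, hg_out x' hx'a hx'T] at heq
      exact hne (hg0inj hxS0 hx'S0 heq)
  -- cardinality count
  haveI : Fintype ↥(C.supp) := Fintype.ofFinite _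
  haveI : Fintype ↥((L.induce C.supp).edgeSet) := Fintype.ofFinite _
  have hTcard : Timg.card = Fintype.card ↥(C.supp) := by
    rw [hTimg, Finset.card_image_of_injective _ Subtype.val_injective]
    exact (Fintype.card_of_subtype Tfin (fun x => by simp [hTfin])).symm
  have hedgecard := htree.card_edgeFinset
  have hz : ∀ x : V, ∃ z : V, x ∈ S0 → z ∈ nbr E v ∧ z ≠ v ∧ z ≠ x ∧ g0 x = {v, x, z} := by
    intro x
    by_cases hxS0 : x ∈ S0
    · obtain ⟨h1, h2, h3, h4⟩ := hg0 x hxS0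
      obtain ⟨z, hz1, hz2, hz3⟩ := eq_triple (hU _ h1) h2 h3 h4
      refine ⟨z, fun _ => ⟨?_, hz1, hz2, hz3⟩⟩
      apply mem_nbr_of_edge h1 h2 _ hz1
      rw [hz3]
      simp
    · exact ⟨x, fun h => absurd h hxS0⟩
  choose Z hZ using hz
  set valEdges : Finset (Sym2 V) :=
    (L.induce C.supp).edgeFinset.image (Sym2.map (fun p => p.1.1)) with hvE
  have hmaps : ∀ x ∈ S0 ∩ Timg, (fun x => s(x, Z x)) x ∈ valEdges := by
    intro x hx
    obtain ⟨hxS0, hxT⟩ := Finset.mem_inter.mp hx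
    obtain ⟨hxn, hsupp⟩ := (mem_Timg x).mp hxT
    obtain ⟨hzn, hzv, hzx, hform⟩ := hZ x hxS0
    have hadj : L.Adj ⟨x, hxn⟩ ⟨Z x, hzn⟩ := by
      apply hadj_of_mem
      · rw [← hform]
        exact (hg0 x hxS0).1
      · exact fun h => hzx h.symm
    have hzsupp : (⟨Z x, hzn⟩ : {z // z ∈ nbr E v}) ∈ C.supp := hsupp_of_adj _ _ hsupp hadj
    rw [hvE, Finset.mem_image]
    refine ⟨s(⟨⟨x, hxn⟩, hsupp⟩, ⟨⟨Z x, hzn⟩, hzsupp⟩), ?_, ?_⟩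
    · rw [SimpleGraph.mem_edgeFinset, SimpleGraph.mem_edgeSet]
      exact hadj
    · rfl
  have hinjf : Set.InjOn (fun x => s(x, Z x)) ↑(S0 ∩ Timg) := by
    intro x hx x' hx' heq2
    have hxS0 := (Finset.mem_inter.mp hx).1
    have hx'S0 := (Finset.mem_inter.mp hx').1
    dsimp only at heq2
    rw [Sym2.eq_iff] at heq2
    rcases heq2 with ⟨h1, h2⟩ | ⟨h1, h2⟩
    · exact h1
    · subst h1
      apply hg0inj hxS0 hx'S0
      rw [(hZ _ hxS0).2.2.2, (hZ x' hx'S0).2.2.2, h2, triple_comm v (Z x') x']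
  have hinter : (S0 ∩ Timg).card ≤ (L.induce C.supp).edgeFinset.card :=
    le_trans (Finset.card_le_card_of_injOn _ hmaps hinjf) Finset.card_image_le
  have h1 : (Timg ∪ S0).card = Timg.card + (S0 \ Timg).card := by
    rw [← Finset.union_sdiff_self_eq_union, Finset.card_union_of_disjoint disjoint_sdiff]
  have h2 := Finset.card_sdiff_add_card_inter S0 Timg
  have hcount : ℓ ≤ (Timg ∪ S0).card := by omega
  calc ℓ ≤ (Timg ∪ S0).card := hcount
  _ ≤ bergeDeg (insert e E) v :=
      le_bergeDeg_of_star (star_of_finset (E := insert e E) _ g hinj hprops)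


lemma key {ℓ : ℕ} {e : Finset V} (hU : Uniform3 E) (hv : v ∈ e) (hcard : e.card = 3)
    (heE : e ∉ E) (hdeg : bergeDeg E v = ℓ - 1) (hℓ : 1 ≤ ℓ) :
    ℓ ≤ bergeDeg (insert e E) v ∨
      ∃ (a b : V) (ha : a ∈ nbr E v) (hb : b ∈ nbr E v),
        e = insert v {a, b} ∧ a ≠ b ∧
        ¬ InTreeComp E v ⟨a, ha⟩ ∧ ¬ InTreeComp E v ⟨b, hb⟩ := by
  classical
  have hex : ∃ x, x ∈ e ∧ x ≠ v := by
    by_contra hno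
    push_neg at hno
    have hsub : e ⊆ {v} := fun x hx => Finset.mem_singleton.mpr (hno x hx)
    have := Finset.card_le_card hsub
    simp [hcard] at this
  obtain ⟨x, hxe, hxv⟩ := hex
  obtain ⟨z, hzv, hzx, hze⟩ := eq_triple hcard hv hxe hxv
  have hze' : z ∈ e := by rw [hze]; simp
  obtain ⟨S0, g0, hS0card, hg0inj, hg0⟩ := finset_of_star (star_bergeDeg (E := E) (v := v))
  rw [hdeg] at hS0card
  have ext_case : ∀ c : V, c ∈ e → c ≠ v → c ∉ S0 → ℓ ≤ bergeDeg (insert e E) v := by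
    intro c hce hcv hcS0
    set g1 : V → Finset V := fun x => if x = c then e else g0 x with hg1
    have hprops : ∀ w ∈ insert c S0, g1 w ∈ insert e E ∧ v ∈ g1 w ∧ w ∈ g1 w ∧ w ≠ v := by
      intro w hw
      rcases Finset.mem_insert.mp hw with rfl | hwS0
      · simp only [hg1, if_pos rfl]
        exact ⟨Finset.mem_insert_self _ _, hv, hce, hcv⟩
      · have hwc : w ≠ c := fun h => hcS0 (h ▸ hwS0)
        simp only [hg1, if_neg hwc]
        obtain ⟨h1, h2, h3, h4⟩ := hg0 w hwS0
        exact ⟨Finset.mem_insert_of_mem h1, h2, h3, h4⟩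
    have hinj : Set.InjOn g1 ↑(insert c S0) := by
      intro w hw w' hw' heq
      have hw : w ∈ insert c S0 := hw
      have hw' : w' ∈ insert c S0 := hw'
      rcases Finset.mem_insert.mp hw with rfl | hwS0 <;>
        rcases Finset.mem_insert.mp hw' with rfl | hw'S0
      · rfl
      · exfalso
        have hw'c : w' ≠ w := fun h => hcS0 (h ▸ hw'S0)
        simp only [hg1, if_pos rfl, if_neg hw'c] at heq
        exact heE (heq ▸ (hg0 w' hw'S0).1)
      · exfalso
        have hwc : w ≠ w' := fun h => hcS0 (h ▸ hwS0)
        simp only [hg1, if_neg hwc, if_pos rfl] at heq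
        exact heE (heq.symm ▸ (hg0 w hwS0).1)
      · have hwc : w ≠ c := fun h => hcS0 (h ▸ hwS0)
        have hw'c : w' ≠ c := fun h => hcS0 (h ▸ hw'S0)
        simp only [hg1, if_neg hwc, if_neg hw'c] at heq
        exact hg0inj hwS0 hw'S0 heq
    have hstar := star_of_finset (E := insert e E) (insert c S0) g1 hinj hprops
    have hc1 : (insert c S0).card = ℓ := by
      rw [Finset.card_insert_of_notMem hcS0, hS0card]
      omega
    exact hc1 ▸ le_bergeDeg_of_star hstar
  by_cases hxS0 : x ∉ S0
  · exact Or.inl (ext_case x hxe hxv hxS0)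
  push_neg at hxS0
  by_cases hzS0 : z ∉ S0
  · exact Or.inl (ext_case z hze' hzv hzS0)
  push_neg at hzS0
  have hxn : x ∈ nbr E v := by
    obtain ⟨h1, h2, h3, h4⟩ := hg0 x hxS0
    exact mem_nbr_of_edge h1 h2 h3 h4
  have hzn : z ∈ nbr E v := by
    obtain ⟨h1, h2, h3, h4⟩ := hg0 z hzS0
    exact mem_nbr_of_edge h1 h2 h3 h4
  by_cases htx : InTreeComp E v ⟨x, hxn⟩
  · exact Or.inl (tree_case hU hdeg hℓ heE hv hxe hxv hxn htx)
  by_cases htz : InTreeComp E v ⟨z, hzn⟩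
  · exact Or.inl (tree_case hU hdeg hℓ heE hv hze' hzv hzn htz)
  · exact Or.inr ⟨x, z, hxn, hzn, hze, fun h => hzx h.symm, htx, htz⟩


end Aux
end AuxLemmas

theorem stmt17 (E : Finset (Finset V)) (ℓ : ℕ) (hU : Uniform3 E)
    (hA : ∀ v : V, ¬ (TypeI E ℓ v ∨ TypeII E ℓ v) → bergeDeg E v ≤ ℓ - 1)
    (hAgg : ∀ v : V, (TypeI E ℓ v ∨ TypeII E ℓ v) → bergeDeg E v = ℓ - 1)
    (hclique : ∀ s : Finset V, (∀ x ∈ s, ¬ (TypeI E ℓ x ∨ TypeII E ℓ x)) →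
      s.card = 3 → s ∈ E) :
    (∀ v : V, bergeDeg E v ≤ ℓ - 1) ∧
    (∀ e : Finset V, e.card = 3 → e ∉ E →
      ∃ w : V, ℓ ≤ bergeDeg (insert e E) w) := by
  constructor
  · intro v
    by_cases h : TypeI E ℓ v ∨ TypeII E ℓ v
    · exact le_of_eq (hAgg v h)
    · exact hA v h
  · intro e hcard heE
    rcases Nat.eq_zero_or_pos ℓ with rfl | hℓ
    · obtain ⟨w, _⟩ := Finset.card_pos.mp (by rw [hcard]; norm_num)
      exact ⟨w, Nat.zero_le _⟩
    have hexv : ∃ v ∈ e, TypeI E ℓ v ∨ TypeII E ℓ v := by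
      by_contra hno
      push_neg at hno
      exact heE (hclique e (fun x hx => not_or.mpr (hno x hx)) hcard)
    obtain ⟨v, hv, hagg⟩ := hexv
    have hdeg := hAgg v hagg
    have finishI : ∀ c : V, c ∈ e → TypeI E ℓ c → ∃ w, ℓ ≤ bergeDeg (insert e E) w := by
      intro c hce hI
      rcases key hU hce hcard heE hI.1 hℓ with h | ⟨a, b, ha, hb, hdec, hab, hna, hnb⟩
      · exact ⟨c, h⟩
      · exfalso
        have hadj := hI.2 ⟨a, ha⟩ ⟨b, hb⟩ hna hnb (fun h => hab (congrArg Subtype.val h))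
        simp only [linkGraph, SimpleGraph.fromRel_adj] at hadj
        apply heE
        rcases hadj.2 with h | h
        · rw [hdec]; exact h
        · rw [hdec, triple_comm c a b]; exact h
    rcases key hU hv hcard heE hdeg hℓ with h | ⟨a, b, ha, hb, hdec, hab, hna, hnb⟩
    · exact ⟨v, h⟩
    rcases hagg with hI | hII
    · exact finishI v hv hI
    · rcases hII.2.2 ⟨a, ha⟩ ⟨b, hb⟩ hna hnb
        (fun h => hab (congrArg Subtype.val h)) with hadj | hIa | hIb
      · exfalso
        simp only [linkGraph, SimpleGraph.fromRel_adj] at hadj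
        apply heE
        rcases hadj.2 with h | h
        · rw [hdec]; exact h
        · rw [hdec, triple_comm v a b]; exact h
      · exact finishI a (by rw [hdec]; simp) hIa
      · exact finishI b (by rw [hdec]; simp) hIb
end

section
/- For 1 ≤ ℓ ≤ 4 and any 3-uniform hypergraph G with at most 4 edges containing a fixed vertex v, the Berge degree of v equals the degree of v. In particular, if every vertex of G has degree at most ℓ − 1 ≤ 3, then G is Berge-K_{1,ℓ}-free, and a 3-graph with a vertex of degree ℓ ≤ 4 contains a Berge-K_{1,ℓ} centered at that vertex. -/
open Finset

variable {V : Type} [DecidableEq V]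

/-!
A Berge star never uses more edges than pass through `v`, so `bergeDeg ≤ hdeg`. Conversely, the
links `e \ {v}` of the edges through `v` are distinct pairs, and a Berge star of size `hdeg E v`
is exactly a system of distinct representatives for them. By Hall's theorem it suffices that any
`k` of these pairs span at least `k` vertices; `k` distinct pairs on `n` points force
`k ≤ n.choose 2`, which for `k ≤ 4` gives `k ≤ n` (five pairs already fit on four points).
-/

lemma le_of_le_choose_two {k n : ℕ} (hk : k ≤ 4) (hkn : k ≤ n.choose 2) : k ≤ n := by
  rcases le_or_gt 4 n with hn | hn
  · omega
  · interval_cases n <;> simp [Nat.choose] at hkn <;> omega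

lemma card_le_card_biUnion_of_card_eq_two {α : Type*} [DecidableEq α] {s : Finset (Finset α)}
    (hs : ∀ e ∈ s, #e = 2) (h4 : #s ≤ 4) : #s ≤ #(s.biUnion id) := by
  have hsub : s ⊆ (s.biUnion id).powersetCard 2 := fun e he =>
    mem_powersetCard.mpr ⟨subset_biUnion_of_mem id he, hs e he⟩
  refine le_of_le_choose_two h4 ?_
  simpa only [card_powersetCard] using card_le_card hsub

lemma IsBergeStar.le_hdeg {E : Finset (Finset V)} {v : V} {m : ℕ}
    (h : IsBergeStar E v m) : m ≤ hdeg E v := by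
  obtain ⟨_, f, _, hf, hmem⟩ := h
  simpa [hdeg] using card_le_card_of_injOn (s := univ) f
    (fun i _ => mem_filter.mpr ⟨(hmem i).1, (hmem i).2.1⟩) hf.injOn

lemma isBergeStar_hdeg {E : Finset (Finset V)} (hU : Uniform3 E) {v : V}
    (h4 : hdeg E v ≤ 4) : IsBergeStar E v (hdeg E v) := by
  set e : Fin (hdeg E v) → Finset V := fun i => ((E.filter (v ∈ ·)).equivFin.symm i).val
  have he_inj : Function.Injective e :=
    Subtype.val_injective.comp (E.filter (v ∈ ·)).equivFin.symm.injective
  have he_mem : ∀ i, e i ∈ E ∧ v ∈ e i := fun i =>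
    mem_filter.mp ((E.filter (v ∈ ·)).equivFin.symm i).property
  set link : Fin (hdeg E v) → Finset V := fun i => (e i).erase v
  have hlink_card : ∀ i, #(link i) = 2 := fun i => by
    rw [card_erase_of_mem (he_mem i).2, hU _ (he_mem i).1]
  have hlink_inj : Function.Injective link := fun i j hij => he_inj <| by
    rw [← insert_erase (he_mem i).2, ← insert_erase (he_mem j).2]
    exact congrArg (insert v) hij
  have hall : ∀ s : Finset (Fin (hdeg E v)), #s ≤ #(s.biUnion link) := fun s => by
    have h := card_le_card_biUnion_of_card_eq_two (s := s.image link)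
      (by simpa only [forall_mem_image] using fun i _ => hlink_card i)
      (card_image_le.trans ((card_le_univ s).trans (by simpa using h4)))
    rwa [card_image_of_injective s hlink_inj, image_biUnion] at h
  obtain ⟨y, hy_inj, hy_mem⟩ := (all_card_le_biUnion_card_iff_exists_injective link).mp hall
  exact ⟨y, e, hy_inj, he_inj, fun i =>
    ⟨(he_mem i).1, (he_mem i).2, mem_of_mem_erase (hy_mem i), ne_of_mem_erase (hy_mem i)⟩⟩

lemma bergeDeg_eq_hdeg {E : Finset (Finset V)} {v : V} (h : IsBergeStar E v (hdeg E v)) :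
    bergeDeg E v = hdeg E v :=
  le_antisymm (csSup_le ⟨_, h⟩ fun _ hm => hm.le_hdeg)
    (le_csSup ⟨hdeg E v, fun _ hm => hm.le_hdeg⟩ h)

theorem stmt19 (ℓ : ℕ) (h1 : 1 ≤ ℓ) (h4 : ℓ ≤ 4)
    (E : Finset (Finset V)) (hU : Uniform3 E) :
    (∀ v : V, hdeg E v ≤ 4 → bergeDeg E v = hdeg E v) ∧
    ((∀ v : V, hdeg E v ≤ ℓ - 1) → ∀ v : V, ¬ IsBergeStar E v ℓ) ∧
    (∀ v : V, hdeg E v = ℓ → IsBergeStar E v ℓ) := by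
  refine ⟨fun v hv => bergeDeg_eq_hdeg (isBergeStar_hdeg hU hv), ?_, ?_⟩
  · intro hdeg_lt v hstar
    have := hstar.le_hdeg
    have := hdeg_lt v
    omega
  · intro v hv
    simpa only [hv] using isBergeStar_hdeg hU (v := v) (by omega)
end
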